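/- arXiv:0705.4201 — 2 statements merged into one kernel-verified Lean document; each statement's English description precedes it below -/
import Mathlib

section
/- An almost-direct product of two residually nilpotent groups is residually nilpotent. -/
/-!
Write `G = A ⋊ C`, view `γ_q(A)` inside `G`, and index lower central series from `γ_0 = ⊤`.
The almost-direct hypothesis says `[A, G] ≤ γ_1(A)`, and the three subgroups lemma propagates
it to `[γ_q(A), G] ≤ γ_{q+1}(A)` for all `q`; a second application gives
`[γ_q(A), γ_p(G)] ≤ γ_{p+q+1}(A)`. Hence `C` acts trivially on each `γ_q(A)/γ_{q+1}(A)` and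
`γ_p(C)` acts trivially on `A/γ_{p+1}(A)`, which is exactly what makes the subgroups
`γ_n(A) ⋊ γ_n(C)` a descending central series of `G`. So `γ_n(G) ≤ γ_n(A) ⋊ γ_n(C)`, and the
intersection of the right-hand sides is trivial.
-/

universe u

namespace Subgroup

variable {G : Type*} [Group G]

theorem commutator_commutator_le_of_rotate {H₁ H₂ H₃ M : Subgroup G} [M.Normal]
    (h1 : ⁅⁅H₂, H₃⁆, H₁⁆ ≤ M) (h2 : ⁅⁅H₃, H₁⁆, H₂⁆ ≤ M) : ⁅⁅H₁, H₂⁆, H₃⁆ ≤ M := by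
  simp only [← QuotientGroup.ker_mk' M, ← map_eq_bot_iff, map_commutator] at h1 h2 ⊢
  exact commutator_commutator_eq_bot_of_rotate h1 h2

theorem commutator_lowerCentralSeries_le {S : Subgroup G} {N : ℕ → Subgroup G}
    [∀ q, (N q).Normal] (hN : ∀ q, ⁅N q, S⁆ ≤ N (q + 1)) (p q : ℕ) :
    ⁅N q, S.lowerCentralSeries p⁆ ≤ N (q + p + 1) := by
  induction p generalizing q with
  | zero => exact hN q
  | succ p ih =>
    rw [lowerCentralSeries_succ, commutator_comm]
    refine commutator_commutator_le_of_rotate ?_ ?_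
    · refine (commutator_mono (commutator_comm_le S (N q) |>.trans (hN q)) le_rfl).trans ?_
      convert ih (q + 1) using 2
      omega
    · exact (commutator_mono (ih q) le_rfl).trans (hN _)

theorem commutator_lowerCentralSeries_top_le {K : Subgroup G} [K.Normal]
    (hK : ⁅K, ⊤⁆ ≤ K.lowerCentralSeries 1) (q : ℕ) :
    ⁅K.lowerCentralSeries q, ⊤⁆ ≤ K.lowerCentralSeries (q + 1) := by
  induction q with
  | zero => exact hK
  | succ q ih =>
    rw [lowerCentralSeries_succ]
    refine commutator_commutator_le_of_rotate ?_ ?_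
    · refine (commutator_mono hK le_rfl).trans ?_
      rw [commutator_comm]
      exact commutator_lowerCentralSeries_le (N := K.lowerCentralSeries) (fun _ => le_rfl) 1 q
    · rw [commutator_comm ⊤]
      exact commutator_mono ih le_rfl

theorem map_mem_lowerCentralSeries {H : Type*} [Group H] (f : G →* H) {n : ℕ} {g : G}
    (hg : g ∈ (⊤ : Subgroup G).lowerCentralSeries n) :
    f g ∈ (⊤ : Subgroup H).lowerCentralSeries n :=
  lowerCentralSeries_mono n le_top (map_lowerCentralSeries _ f n ▸ mem_map_of_mem f hg)

end Subgroup

namespace SemidirectProduct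

open Subgroup
open scoped commutatorElement

variable {A C : Type*} [Group A] [Group C] {φ : C →* MulAut A}

theorem commutator_inr_inl (c : C) (a : A) :
    ⁅(inr c : A ⋊[φ] C), (inl a : A ⋊[φ] C)⁆ = inl (φ c a * a⁻¹) := by
  ext <;> simp [commutatorElement_def]

theorem commutator_inl (a : A) (g : A ⋊[φ] C) :
    ⁅(inl a : A ⋊[φ] C), g⁆ = inl (a * (g.left * φ g.right a⁻¹ * g.left⁻¹)) := by
  ext <;> simp [commutatorElement_def, mul_assoc]

theorem commutator_left (x y : A ⋊[φ] C) :
    ⁅x, y⁆.left = x.left * φ x.right y.left * φ (x.right * y.right * x.right⁻¹) x.left⁻¹ *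
      φ ⁅x.right, y.right⁆ y.left⁻¹ := by
  simp [commutatorElement_def, mul_assoc]

theorem commutator_right (x y : A ⋊[φ] C) : ⁅x, y⁆.right = ⁅x.right, y.right⁆ :=
  map_commutatorElement rightHom x y

instance normal_range_inl : (inl : A →* A ⋊[φ] C).range.Normal :=
  range_inl_eq_ker_rightHom (φ := φ) ▸ inferInstance

theorem inl_mem_range_inl_lowerCentralSeries_iff {n : ℕ} {a : A} :
    inl a ∈ (inl : A →* A ⋊[φ] C).range.lowerCentralSeries n ↔
      a ∈ (⊤ : Subgroup A).lowerCentralSeries n := by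
  rw [MonoidHom.range_eq_map, ← map_lowerCentralSeries, mem_map_iff_mem inl_injective]

variable (φ) in
def semidirectSubgroup (H : Subgroup A) (K : Subgroup C) (hHK : ∀ c ∈ K, ∀ a ∈ H, φ c a ∈ H) :
    Subgroup (A ⋊[φ] C) where
  carrier := {x | x.left ∈ H ∧ x.right ∈ K}
  one_mem' := ⟨H.one_mem, K.one_mem⟩
  mul_mem' := fun ⟨hxl, hxr⟩ ⟨hyl, hyr⟩ => ⟨H.mul_mem hxl (hHK _ hxr _ hyl), K.mul_mem hxr hyr⟩
  inv_mem' := fun ⟨hxl, hxr⟩ => ⟨hHK _ (K.inv_mem hxr) _ (H.inv_mem hxl), K.inv_mem hxr⟩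

variable (h : ∀ (c : C) (a : A), Abelianization.of (φ c a) = Abelianization.of a)
include h

theorem commutator_range_inl_top_le :
    ⁅(inl : A →* A ⋊[φ] C).range, ⊤⁆ ≤ (inl : A →* A ⋊[φ] C).range.lowerCentralSeries 1 := by
  rw [commutator_le]
  rintro _ ⟨a, rfl⟩ g -
  rw [commutator_inl, inl_mem_range_inl_lowerCentralSeries_iff, top_lowerCentralSeries_one,
    ← Abelianization.ker_of, MonoidHom.mem_ker]
  simp [h]

theorem mul_inv_mem_lowerCentralSeries {p q : ℕ} {c : C} {a : A}
    (hc : c ∈ (⊤ : Subgroup C).lowerCentralSeries p)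
    (ha : a ∈ (⊤ : Subgroup A).lowerCentralSeries q) :
    φ c a * a⁻¹ ∈ (⊤ : Subgroup A).lowerCentralSeries (q + p + 1) := by
  rw [← inl_mem_range_inl_lowerCentralSeries_iff (φ := φ), ← commutator_inr_inl]
  refine commutator_lowerCentralSeries_le (commutator_lowerCentralSeries_top_le
    (commutator_range_inl_top_le h)) p q ?_
  rw [commutator_comm]
  exact commutator_mem_commutator (map_mem_lowerCentralSeries inr hc)
    (inl_mem_range_inl_lowerCentralSeries_iff.2 ha)

theorem isDescendingCentralSeries_semidirectSubgroup :
    Subgroup.IsDescendingCentralSeries fun n =>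
      semidirectSubgroup φ ((⊤ : Subgroup A).lowerCentralSeries n)
        ((⊤ : Subgroup C).lowerCentralSeries n)
        fun c _ _ => map_mem_lowerCentralSeries (φ c).toMonoidHom := by
  refine ⟨eq_top_iff.2 fun _ _ => ⟨mem_top _, mem_top _⟩, ?_⟩
  rintro x n ⟨hxl, hxr⟩ y
  refine ⟨?_, ?_⟩
  · have hfix : ∀ {c : C} {a : A}, (c ∈ (⊤ : Subgroup C).lowerCentralSeries n ∨
        a ∈ (⊤ : Subgroup A).lowerCentralSeries n) →
        (φ c a : A ⧸ (⊤ : Subgroup A).lowerCentralSeries (n + 1)) = a := by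
      rintro c a (hc | ha)
      · rw [QuotientGroup.eq_iff_div_mem, div_eq_mul_inv, ← zero_add n]
        exact mul_inv_mem_lowerCentralSeries h hc (mem_top a)
      · rw [QuotientGroup.eq_iff_div_mem, div_eq_mul_inv]
        exact mul_inv_mem_lowerCentralSeries h (p := 0) (mem_top c) ha
    have hcomm : ⁅x.right, y.right⁆ ∈ (⊤ : Subgroup C).lowerCentralSeries n :=
      Subgroup.lowerCentralSeries_antitone _ n.le_succ (commutator_mem_commutator hxr (mem_top _))
    rw [← QuotientGroup.eq_one_iff, commutator_left, QuotientGroup.mk_mul, QuotientGroup.mk_mul,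
      QuotientGroup.mk_mul, hfix (.inl hxr), hfix (.inr (inv_mem hxl)), hfix (.inl hcomm),
      ← QuotientGroup.mk_mul, ← QuotientGroup.mk_mul, ← QuotientGroup.mk_mul,
      QuotientGroup.eq_one_iff]
    exact commutator_mem_commutator hxl (mem_top _)
  · rw [commutator_right]
    exact commutator_mem_commutator hxr (mem_top _)

end SemidirectProduct

open SemidirectProduct in
/-- An almost-direct product of two residually nilpotent groups is residually nilpotent. -/
theorem stmt4 (A C : Type u) [Group A] [Group C] (φ : C →* MulAut A)
    (h : ∀ (c : C) (a : A), Abelianization.of (φ c a) = Abelianization.of a)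
    (hA : (⨅ i : ℕ, (⊤ : Subgroup A).lowerCentralSeries i) = ⊥)
    (hC : (⨅ i : ℕ, (⊤ : Subgroup C).lowerCentralSeries i) = ⊥) :
    (⨅ i : ℕ, (⊤ : Subgroup (A ⋊[φ] C)).lowerCentralSeries i) = ⊥ := by
  refine eq_bot_iff.2 fun g hg => ?_
  have hg' n := Subgroup.descending_central_series_ge_lower _
    (isDescendingCentralSeries_semidirectSubgroup h) n (Subgroup.mem_iInf.1 hg n)
  have hleft : g.left ∈ ⨅ i : ℕ, (⊤ : Subgroup A).lowerCentralSeries i :=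
    Subgroup.mem_iInf.2 fun n => (hg' n).1
  have hright : g.right ∈ ⨅ i : ℕ, (⊤ : Subgroup C).lowerCentralSeries i :=
    Subgroup.mem_iInf.2 fun n => (hg' n).2
  rw [hA, Subgroup.mem_bot] at hleft
  rw [hC, Subgroup.mem_bot] at hright
  exact Subgroup.mem_bot.2 (SemidirectProduct.ext hleft hright)
end

section
/- An almost-direct product of two residually torsion-free nilpotent groups is residually torsion-free nilpotent. -/
/-!
If `x = (a, c)` with `c ≠ 1`, project onto `C`. Otherwise `a ≠ 1` survives in a torsion-free
nilpotent quotient of `A` with `γₙ = 1`, hence in `Q = A ⧸ I`, where `I` is the isolator of `γₙ(A)`.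
Since `I` is characteristic, `C` acts on `Q` through a group `D ≤ Aut Q` of automorphisms that are
trivial on `Q / γ₁(Q)`. For such `D`, the subgroups `{(q, d) | q ∈ γₖ(Q), d is trivial modulo
γₖ₊₁(Q)}` form a central series of `Q ⋊ D` (Kaloujnine), so `Q ⋊ D` is nilpotent.

In a nilpotent group the torsion elements form a subgroup: a nilpotent group generated by finitely
many torsion elements is finite, by Schur's theorem and induction on the class. The image of
`(a, 1)` is not torsion in `Q ⋊ D`, so it survives in the torsion-free quotient of `Q ⋊ D`.
-/

universe u

/-- A predicate on a monoid saying that there is no non-trivial element of finite order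
(the definition `Monoid.IsTorsionFree` of older Mathlib, since removed). -/
def Monoid.IsTorsionFree (G : Type*) [Monoid G] : Prop :=
  ∀ g : G, g ≠ 1 → ¬IsOfFinOrder g

open scoped commutatorElement

namespace Subgroup

section LowerCentralSeries

variable {G : Type*} [Group G]

theorem lowerCentralSeries_map_of_surjective {H : Type*} [Group H] {f : G →* H}
    (hf : Function.Surjective f) (n : ℕ) :
    (lowerCentralSeries ⊤ n).map f = (⊤ : Subgroup H).lowerCentralSeries n := by
  rw [map_lowerCentralSeries, map_top_of_surjective f hf]

theorem apply_mem_of_characteristic {N : Subgroup G} [N.Characteristic] (p : MulAut G) {x : G}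
    (hx : x ∈ N) : p x ∈ N :=
  characteristic_iff_le_comap.mp ‹_› p hx

theorem commutator_commutator_le_of_rotate_s5 {H₁ H₂ H₃ N : Subgroup G} [N.Normal]
    (h₁ : ⁅⁅H₂, H₃⁆, H₁⁆ ≤ N) (h₂ : ⁅⁅H₃, H₁⁆, H₂⁆ ≤ N) : ⁅⁅H₁, H₂⁆, H₃⁆ ≤ N := by
  have vanish {K₁ K₂ K₃ : Subgroup G} (h : ⁅⁅K₁, K₂⁆, K₃⁆ ≤ N) :
      ⁅⁅K₁.map (QuotientGroup.mk' N), K₂.map (QuotientGroup.mk' N)⁆,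
        K₃.map (QuotientGroup.mk' N)⁆ = ⊥ := by
    rwa [← map_commutator, ← map_commutator, map_eq_bot_iff, QuotientGroup.ker_mk']
  have := commutator_commutator_eq_bot_of_rotate (vanish h₁) (vanish h₂)
  rwa [← map_commutator, ← map_commutator, map_eq_bot_iff, QuotientGroup.ker_mk'] at this

theorem commutator_lowerCentralSeries_le_s5 (i j : ℕ) :
    ⁅(⊤ : Subgroup G).lowerCentralSeries i, (⊤ : Subgroup G).lowerCentralSeries j⁆ ≤
      (⊤ : Subgroup G).lowerCentralSeries (i + j + 1) := by
  induction j generalizing i with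
  | zero => rfl
  | succ j ih =>
    rw [lowerCentralSeries_succ, commutator_comm]
    refine commutator_commutator_le_of_rotate_s5 ?_ ?_
    · rw [commutator_comm (⊤ : Subgroup G), ← lowerCentralSeries_succ]
      simpa only [Nat.add_right_comm i 1 j, Nat.add_assoc i j 1] using ih (i + 1)
    · exact (commutator_mono (ih i) le_rfl).trans_eq (lowerCentralSeries_succ _ _).symm

end LowerCentralSeries

section Inertia

variable {Q : Type*} [Group Q]

/-- The multiplicative analogue of `AddSubgroup.inertia`, for the action of `MulAut Q` on `Q`. -/
def autInertia (N : Subgroup Q) : Subgroup (MulAut Q) where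
  carrier := {p | ∀ q, q⁻¹ * p q ∈ N}
  one_mem' q := by simp [N.one_mem]
  mul_mem' {p p'} hp hp' q := by
    simpa [mul_assoc] using N.mul_mem (hp' q) (hp (p' q))
  inv_mem' {p} hp q := by
    simpa using N.inv_mem (hp (p⁻¹ q))

variable {N M : Subgroup Q} {p : MulAut Q}

theorem mem_autInertia_iff_mk [N.Normal] : p ∈ N.autInertia ↔ ∀ q, (p q : Q ⧸ N) = q :=
  forall_congr' fun _ => QuotientGroup.eq.symm.trans eq_comm

theorem autInertia_mono (h : N ≤ M) : N.autInertia ≤ M.autInertia :=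
  fun _ hp q => h (hp q)

theorem autInertia_bot : (⊥ : Subgroup Q).autInertia = ⊥ := by
  refine eq_bot_iff.mpr fun p hp => ?_
  ext q
  exact (inv_mul_eq_one.mp (mem_bot.mp (hp q))).symm

theorem inv_mul_apply_mem_lowerCentralSeries {i : ℕ}
    (hp : p ∈ ((⊤ : Subgroup Q).lowerCentralSeries i).autInertia) :
    ∀ j, ∀ x ∈ (⊤ : Subgroup Q).lowerCentralSeries j,
      x⁻¹ * p x ∈ (⊤ : Subgroup Q).lowerCentralSeries (i + j)
  | 0, x, _ => hp x
  | j + 1, x, hx => by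
    let M := (⊤ : Subgroup Q).lowerCentralSeries (i + (j + 1))
    suffices (⊤ : Subgroup Q).lowerCentralSeries (j + 1) ≤
        MonoidHom.eqLocus (QuotientGroup.mk' M) ((QuotientGroup.mk' M).comp p.toMonoidHom) from
      QuotientGroup.eq.mp (this hx)
    refine commutator_le.mpr fun u hu v _ => QuotientGroup.eq.mpr ?_
    obtain ⟨c, hc, hpu⟩ : ∃ c ∈ (⊤ : Subgroup Q).lowerCentralSeries (i + j), p u = u * c :=
      ⟨u⁻¹ * p u, inv_mul_apply_mem_lowerCentralSeries hp j u hu, by group⟩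
    obtain ⟨d, hd, hpv⟩ : ∃ d ∈ (⊤ : Subgroup Q).lowerCentralSeries i, p v = v * d :=
      ⟨v⁻¹ * p v, hp v, by group⟩
    have key : ⁅u, v⁆⁻¹ * p ⁅u, v⁆ =
        (⁅u, v⁆⁻¹ * u) * ⁅c, v * d⁆ * (⁅u, v⁆⁻¹ * u)⁻¹ * (v * ⁅u, d⁆ * v⁻¹) := by
      rw [map_commutatorElement, hpu, hpv]
      simp only [commutatorElement_def]
      group
    change ⁅u, v⁆⁻¹ * p ⁅u, v⁆ ∈ M
    rw [key]
    refine mul_mem (Normal.conj_mem inferInstance _ ?_ _) (Normal.conj_mem inferInstance _ ?_ v)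
    · exact commutator_mem_commutator hc (mem_top _)
    · exact ((commutator_lowerCentralSeries_le_s5 j i).trans
        (lowerCentralSeries_antitone _ (by omega))) (commutator_mem_commutator hu hd)

theorem commutator_autInertia_le (i j : ℕ) :
    ⁅((⊤ : Subgroup Q).lowerCentralSeries i).autInertia,
      ((⊤ : Subgroup Q).lowerCentralSeries j).autInertia⁆ ≤
      ((⊤ : Subgroup Q).lowerCentralSeries (i + j)).autInertia := by
  let M := (⊤ : Subgroup Q).lowerCentralSeries (i + j)
  refine commutator_le.mpr fun p hp s hs => ?_
  have hcomm (q : Q) : (p (s q) : Q ⧸ M) = s (p q) := by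
    obtain ⟨u, hu, hpq⟩ : ∃ u ∈ (⊤ : Subgroup Q).lowerCentralSeries i, p q = q * u :=
      ⟨q⁻¹ * p q, hp q, by group⟩
    obtain ⟨v, hv, hsq⟩ : ∃ v ∈ (⊤ : Subgroup Q).lowerCentralSeries j, s q = q * v :=
      ⟨q⁻¹ * s q, hs q, by group⟩
    have hpv : (p v : Q ⧸ M) = v :=
      (QuotientGroup.eq.mpr (inv_mul_apply_mem_lowerCentralSeries hp j v hv)).symm
    have hsu : (s u : Q ⧸ M) = u := by
      refine (QuotientGroup.eq.mpr ?_).symm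
      simpa only [Nat.add_comm j i] using inv_mul_apply_mem_lowerCentralSeries hs i u hu
    have huv : (u : Q ⧸ M) * v = v * u := by
      rw [← QuotientGroup.mk_mul, ← QuotientGroup.mk_mul, QuotientGroup.eq]
      refine lowerCentralSeries_antitone _ (Nat.le_succ _)
        (commutator_lowerCentralSeries_le_s5 i j ?_)
      rw [commutator_comm]
      simpa [commutatorElement_def, mul_assoc] using
        commutator_mem_commutator (inv_mem hv) (inv_mem hu)
    simp only [hpq, hsq, map_mul, QuotientGroup.mk_mul, hpv, hsu, mul_assoc, huv]
  refine mem_autInertia_iff_mk.mpr fun q => ?_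
  simpa [commutatorElement_def] using hcomm (p⁻¹ (s⁻¹ q))

end Inertia

end Subgroup

namespace SemidirectProduct

open Subgroup

variable {Q C : Type*} [Group Q] [Group C] (φ : C →* MulAut Q)

theorem commutatorElement_left (x g : Q ⋊[φ] C) :
    ⁅x, g⁆.left = x.left * φ x.right g.left * φ (x.right * g.right * x.right⁻¹) x.left⁻¹ *
      φ ⁅x.right, g.right⁆ g.left⁻¹ := by
  simp [commutatorElement_def, mul_assoc]

theorem commutatorElement_right (x g : Q ⋊[φ] C) : ⁅x, g⁆.right = ⁅x.right, g.right⁆ :=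
  map_commutatorElement (rightHom : Q ⋊[φ] C →* C) x g

def inertiaSeries (k : ℕ) : Subgroup (Q ⋊[φ] C) where
  carrier := {t | t.left ∈ (⊤ : Subgroup Q).lowerCentralSeries k ∧
    φ t.right ∈ ((⊤ : Subgroup Q).lowerCentralSeries (k + 1)).autInertia}
  one_mem' := ⟨one_mem _, by simp [one_mem]⟩
  mul_mem' {a b} ha hb :=
    ⟨mul_mem ha.1 (apply_mem_of_characteristic _ hb.1), by simpa using mul_mem ha.2 hb.2⟩
  inv_mem' {a} ha :=
    ⟨apply_mem_of_characteristic _ (inv_mem ha.1), by simpa using inv_mem ha.2⟩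

variable {φ}

theorem isDescendingCentralSeries_inertiaSeries
    (hφ : ∀ c, φ c ∈ ((⊤ : Subgroup Q).lowerCentralSeries 1).autInertia) :
    Subgroup.IsDescendingCentralSeries (inertiaSeries φ) := by
  refine ⟨eq_top_iff.mpr fun t _ => ⟨mem_top _, hφ _⟩, fun x k hx g => ⟨?_, ?_⟩⟩
  · set M := (⊤ : Subgroup Q).lowerCentralSeries (k + 1)
    have hxr : ∀ q, (φ x.right q : Q ⧸ M) = q := mem_autInertia_iff_mk.mp hx.2
    have hcomm : ∀ q, (φ ⁅x.right, g.right⁆ q : Q ⧸ M) = q := by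
      refine mem_autInertia_iff_mk.mp (autInertia_mono (Subgroup.lowerCentralSeries_antitone _
        (Nat.le_succ _)) ?_)
      rw [map_commutatorElement]
      exact commutator_autInertia_le (k + 1) 1 (commutator_mem_commutator hx.2 (hφ _))
    have hxl : ∀ c, (φ c x.left⁻¹ : Q ⧸ M) = (x.left⁻¹ : Q) := by
      intro c
      refine (QuotientGroup.eq.mpr ?_).symm
      simpa only [Nat.add_comm 1 k] using
        inv_mul_apply_mem_lowerCentralSeries (hφ c) k _ (inv_mem hx.1)
    rw [← QuotientGroup.eq_one_iff, commutatorElement_left]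
    simp only [QuotientGroup.mk_mul, hxr, hxl, hcomm]
    rw [← QuotientGroup.mk_mul, ← QuotientGroup.mk_mul, ← QuotientGroup.mk_mul,
      ← commutatorElement_def, QuotientGroup.eq_one_iff]
    exact commutator_mem_commutator hx.1 (mem_top _)
  · rw [commutatorElement_right, map_commutatorElement]
    exact commutator_autInertia_le (k + 1) 1 (commutator_mem_commutator hx.2 (hφ _))

theorem isNilpotent_of_injective [Group.IsNilpotent Q] (hinj : Function.Injective φ)
    (hφ : ∀ c, φ c ∈ ((⊤ : Subgroup Q).lowerCentralSeries 1).autInertia) :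
    Group.IsNilpotent (Q ⋊[φ] C) := by
  obtain ⟨n, hn⟩ := Subgroup.nilpotent_iff_lowerCentralSeries.mp ‹Group.IsNilpotent Q›
  refine (Subgroup.nilpotent_iff_finite_descending_central_series _).mpr
    ⟨n, inertiaSeries φ, isDescendingCentralSeries_inertiaSeries hφ, eq_bot_iff.mpr ?_⟩
  rintro t ⟨hl, hr⟩
  rw [hn, mem_bot] at hl
  have : φ t.right ∈ (⊥ : Subgroup (MulAut Q)) := by
    rw [← autInertia_bot, ← hn]
    exact autInertia_mono (Subgroup.lowerCentralSeries_antitone _ (Nat.le_succ n)) hr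
  rw [mem_bot, ← map_one φ] at this
  exact SemidirectProduct.ext hl (hinj this)

end SemidirectProduct

namespace Subgroup

variable {G : Type*} [Group G]

theorem commutatorElement_mul_mul_of_mem_center {z w : G} (hz : z ∈ center G)
    (hw : w ∈ center G) (g h : G) : ⁅g * z, h * w⁆ = ⁅g, h⁆ := by
  rw [commutatorElement_mul_left_eq_conj_mul, commutatorElement_mul_right_eq_mul_conj g,
    commutatorElement_eq_one_iff_mul_comm.mpr (mem_center_iff.mp hz _).symm,
    commutatorElement_eq_one_iff_mul_comm.mpr (mem_center_iff.mp hw g)]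
  group

theorem finite_commutatorSet_of_finiteIndex_center [(center G).FiniteIndex] :
    Finite (commutatorSet G) := by
  refine Set.Finite.to_subtype ((Set.finite_range
    fun p : (G ⧸ center G) × (G ⧸ center G) => ⁅p.1.out, p.2.out⁆).subset ?_)
  rintro _ ⟨g, h, rfl⟩
  obtain ⟨z, hz⟩ := QuotientGroup.mk_out_eq_mul (center G) g
  obtain ⟨w, hw⟩ := QuotientGroup.mk_out_eq_mul (center G) h
  exact ⟨(g, h), by simp only [hz, hw, commutatorElement_mul_mul_of_mem_center z.2 w.2]⟩

end Subgroup

theorem Subgroup.closure_image_eq_top {G H : Type*} [Group G] [Group H] {f : G →* H}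
    (hf : Function.Surjective f) {S : Set G} (hS : Subgroup.closure S = ⊤) :
    Subgroup.closure (f '' S) = ⊤ := by
  rw [← MonoidHom.map_closure, hS, Subgroup.map_top_of_surjective f hf]

namespace Group

open Subgroup

variable {G : Type*} [Group G] {S : Set G}

theorem finite_abelianization_of_closure_eq_top (hS : S.Finite) (hSG : closure S = ⊤)
    (htor : ∀ s ∈ S, IsOfFinOrder s) : Finite (Abelianization G) := by
  have : Group.FG G := Group.fg_iff.mpr ⟨S, hSG, hS⟩
  have : Group.FG (Abelianization G) := QuotientGroup.fg (commutator G)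
  refine CommGroup.finite_of_fg_isMulTorsion (Abelianization G) fun x => ?_
  have hx : x ∈ closure (Abelianization.of '' S) := by
    rw [closure_image_eq_top (QuotientGroup.mk_surjective (s := commutator G)) hSG]
    trivial
  refine (closure_le (CommGroup.torsion _)).mpr ?_ hx
  rintro _ ⟨s, hs, rfl⟩
  exact Abelianization.of.isOfFinOrder (htor s hs)

theorem finite_of_isNilpotent_of_closure_eq_top [IsNilpotent G] (hS : S.Finite)
    (hSG : closure S = ⊤) (htor : ∀ s ∈ S, IsOfFinOrder s) : Finite G := by
  revert S
  apply @nilpotent_center_quotient_ind _ G _ _ <;> clear! G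
  · intro G _ _ _ _ _ _
    infer_instance
  · intro G _ _ ih S hS hSG htor
    have : Finite (G ⧸ center G) := by
      refine ih (hS.image _) (closure_image_eq_top (QuotientGroup.mk'_surjective _) hSG) ?_
      rintro _ ⟨s, hs, rfl⟩
      exact (QuotientGroup.mk' _).isOfFinOrder (htor s hs)
    have := finiteIndex_of_finite_quotient (H := center G)
    have := finite_commutatorSet_of_finiteIndex_center (G := G)
    -- Schur's theorem now makes `commutator G` finite.
    have : Finite (G ⧸ commutator G) := finite_abelianization_of_closure_eq_top hS hSG htor
    exact Finite.of_equiv _ (groupEquivQuotientProdSubgroup (s := commutator G)).symm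

end Group

open Subgroup in
theorem IsOfFinOrder.mul_of_isNilpotent {G : Type*} [Group G] [Group.IsNilpotent G] {a b : G}
    (ha : IsOfFinOrder a) (hb : IsOfFinOrder b) : IsOfFinOrder (a * b) := by
  let H := closure ({a, b} : Set G)
  have : Finite H := by
    refine Group.finite_of_isNilpotent_of_closure_eq_top (S := H.subtype ⁻¹' {a, b})
      ((Set.toFinite _).preimage H.subtype_injective.injOn) closure_closure_coe_preimage ?_
    rintro x (hx | hx) <;> refine Submonoid.isOfFinOrder_coe.mp ?_ <;> simp_all
  exact Submonoid.isOfFinOrder_coe.mpr (isOfFinOrder_of_finite (⟨a * b,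
    mul_mem (subset_closure (by simp)) (subset_closure (by simp))⟩ : H))

namespace Group

section

variable (G : Type*) [Group G] [IsNilpotent G]

def nilpotentTorsion : Subgroup G where
  carrier := {g | IsOfFinOrder g}
  one_mem' := IsOfFinOrder.one
  mul_mem' := IsOfFinOrder.mul_of_isNilpotent
  inv_mem' := IsOfFinOrder.inv

instance : (nilpotentTorsion G).Normal :=
  ⟨fun _ hx g => (MulAut.conj g).toMonoidHom.isOfFinOrder hx⟩

theorem isTorsionFree_quotient_nilpotentTorsion :
    Monoid.IsTorsionFree (G ⧸ nilpotentTorsion G) := by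
  intro x hx hfin
  induction x using QuotientGroup.induction_on with | H g =>
  obtain ⟨m, hm, hpow⟩ := isOfFinOrder_iff_pow_eq_one.mp hfin
  rw [← QuotientGroup.mk_pow, QuotientGroup.eq_one_iff] at hpow
  exact hx ((QuotientGroup.eq_one_iff g).mpr (IsOfFinOrder.of_pow hpow hm.ne'))

end

theorem exists_torsionFree_quotient_apply_ne_one {G : Type u} [Group G] [IsNilpotent G] {g : G}
    (hg : ¬IsOfFinOrder g) : ∃ (H : Type u) (_ : Group H) (f : G →* H),
      IsNilpotent H ∧ Monoid.IsTorsionFree H ∧ f g ≠ 1 :=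
  ⟨_, _, QuotientGroup.mk' (nilpotentTorsion G), inferInstance,
    isTorsionFree_quotient_nilpotentTorsion G, fun h => hg ((QuotientGroup.eq_one_iff g).mp h)⟩

end Group

namespace Subgroup

variable {A : Type*} [Group A]

theorem isNilpotent_quotient_of_lowerCentralSeries_le {N : Subgroup A} [N.Normal] {n : ℕ}
    (h : (⊤ : Subgroup A).lowerCentralSeries n ≤ N) : Group.IsNilpotent (A ⧸ N) := by
  refine Subgroup.nilpotent_iff_lowerCentralSeries.mpr ⟨n, ?_⟩
  rwa [← lowerCentralSeries_map_of_surjective (QuotientGroup.mk'_surjective _), map_eq_bot_iff,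
    QuotientGroup.ker_mk']

instance (n : ℕ) : Group.IsNilpotent (A ⧸ (⊤ : Subgroup A).lowerCentralSeries n) :=
  isNilpotent_quotient_of_lowerCentralSeries_le le_rfl

variable (A) in
/-- The isolator of `γₙ(A)`: the elements some positive power of which lies in `γₙ(A)`. -/
def lowerCentralIsolator (n : ℕ) : Subgroup A :=
  (Group.nilpotentTorsion (A ⧸ (⊤ : Subgroup A).lowerCentralSeries n)).comap (QuotientGroup.mk' _)

variable {n : ℕ} {a : A}

theorem mem_lowerCentralIsolator :
    a ∈ lowerCentralIsolator A n ↔ ∃ m, 0 < m ∧ a ^ m ∈ (⊤ : Subgroup A).lowerCentralSeries n := by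
  simp only [lowerCentralIsolator, mem_comap, QuotientGroup.mk'_apply]
  exact isOfFinOrder_iff_pow_eq_one.trans (by simp [← QuotientGroup.mk_pow])

instance : (lowerCentralIsolator A n).Characteristic := by
  refine characteristic_iff_le_comap.mpr fun e a ha => ?_
  obtain ⟨m, hm, ham⟩ := mem_lowerCentralIsolator.mp ha
  exact mem_lowerCentralIsolator.mpr ⟨m, hm, by simpa using apply_mem_of_characteristic e ham⟩

instance : Group.IsNilpotent (A ⧸ lowerCentralIsolator A n) :=
  isNilpotent_quotient_of_lowerCentralSeries_le fun a ha =>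
    mem_lowerCentralIsolator.mpr ⟨1, one_pos, by simpa using ha⟩

theorem isTorsionFree_quotient_lowerCentralIsolator :
    Monoid.IsTorsionFree (A ⧸ lowerCentralIsolator A n) := by
  intro x hx hfin
  induction x using QuotientGroup.induction_on with | H a =>
  obtain ⟨m, hm, hpow⟩ := isOfFinOrder_iff_pow_eq_one.mp hfin
  rw [← QuotientGroup.mk_pow, QuotientGroup.eq_one_iff] at hpow
  obtain ⟨k, hk, hak⟩ := mem_lowerCentralIsolator.mp hpow
  exact hx ((QuotientGroup.eq_one_iff a).mpr
    (mem_lowerCentralIsolator.mpr ⟨m * k, Nat.mul_pos hm hk, by rwa [pow_mul]⟩))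

theorem lowerCentralIsolator_le_ker {H : Type*} [Group H] (f : A →* H)
    (hH : (⊤ : Subgroup H).lowerCentralSeries n = ⊥) (htf : Monoid.IsTorsionFree H) :
    lowerCentralIsolator A n ≤ f.ker := by
  intro a ha
  obtain ⟨m, hm, ham⟩ := mem_lowerCentralIsolator.mp ha
  have : f a ^ m = 1 := by
    rw [← map_pow, ← mem_bot, ← hH]
    refine lowerCentralSeries_mono n (le_top (a := (⊤ : Subgroup A).map f)) ?_
    exact (map_lowerCentralSeries _ f n).le (mem_map_of_mem f ham)
  by_contra hfa
  exact htf _ hfa (isOfFinOrder_iff_pow_eq_one.mpr ⟨m, hm, this⟩)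

end Subgroup

namespace MulAut

variable {G : Type*} [Group G] (N : Subgroup G) [N.Characteristic]

def quotient : MulAut G →* MulAut (G ⧸ N) where
  toFun e := QuotientGroup.congr N N e (Subgroup.characteristic_iff_map_eq.mp ‹_› e)
  map_one' := by
    ext x
    induction x using QuotientGroup.induction_on
    rfl
  map_mul' e f := by
    ext x
    induction x using QuotientGroup.induction_on
    rfl

variable {N}

theorem quotient_mem_autInertia {e : MulAut G} {M : Subgroup G} (he : e ∈ M.autInertia) :
    quotient N e ∈ (M.map (QuotientGroup.mk' N)).autInertia := by
  intro q
  induction q using QuotientGroup.induction_on with | H g =>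
  exact ⟨g⁻¹ * e g, he g, rfl⟩

end MulAut

namespace SemidirectProduct

variable {A C : Type*} [Group A] [Group C] (φ : C →* MulAut A) (N : Subgroup A) [N.Characteristic]

/-- Acting through this image of `C` makes the action on `A ⧸ N` faithful. -/
abbrev quotientActionRange : Subgroup (MulAut (A ⧸ N)) := ((MulAut.quotient N).comp φ).range

def toQuotient : A ⋊[φ] C →* (A ⧸ N) ⋊[(quotientActionRange φ N).subtype] quotientActionRange φ N :=
  map (QuotientGroup.mk' N) ((MulAut.quotient N).comp φ).rangeRestrict fun _ => rfl

theorem toQuotient_inl (a : A) : toQuotient φ N (inl a) = inl (a : A ⧸ N) := map_inl ..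

theorem isNilpotent_quotient [Group.IsNilpotent (A ⧸ N)]
    (hφ : ∀ c, φ c ∈ ((⊤ : Subgroup A).lowerCentralSeries 1).autInertia) :
    Group.IsNilpotent ((A ⧸ N) ⋊[(quotientActionRange φ N).subtype] quotientActionRange φ N) := by
  refine isNilpotent_of_injective Subtype.val_injective ?_
  rintro ⟨_, c, rfl⟩
  rw [← Subgroup.lowerCentralSeries_map_of_surjective (QuotientGroup.mk'_surjective N)]
  exact MulAut.quotient_mem_autInertia (hφ c)

end SemidirectProduct

/-- An almost-direct product of two residually torsion-free nilpotent groups is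
residually torsion-free nilpotent. -/
theorem stmt5 (A C : Type u) [Group A] [Group C] (φ : C →* MulAut A)
    (h : ∀ (c : C) (a : A), Abelianization.of (φ c a) = Abelianization.of a)
    (hA : ∀ x : A, x ≠ 1 → ∃ (H : Type u) (_ : Group H) (f : A →* H),
      Group.IsNilpotent H ∧ Monoid.IsTorsionFree H ∧ f x ≠ 1)
    (hC : ∀ x : C, x ≠ 1 → ∃ (H : Type u) (_ : Group H) (f : C →* H),
      Group.IsNilpotent H ∧ Monoid.IsTorsionFree H ∧ f x ≠ 1) :
    ∀ x : A ⋊[φ] C, x ≠ 1 → ∃ (H : Type u) (_ : Group H) (f : (A ⋊[φ] C) →* H),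
      Group.IsNilpotent H ∧ Monoid.IsTorsionFree H ∧ f x ≠ 1 := by
  intro x hx
  by_cases hr : x.right = 1
  swap
  · obtain ⟨H, _, f, hH, htf, hfx⟩ := hC x.right hr
    exact ⟨H, _, f.comp SemidirectProduct.rightHom, hH, htf, hfx⟩
  obtain ⟨a, rfl⟩ : ∃ a, x = SemidirectProduct.inl a := ⟨x.left, by ext <;> simp [hr]⟩
  obtain ⟨H, _, f, hH, htf, hfa⟩ := hA a fun ha => hx (by rw [ha, map_one])
  obtain ⟨n, hn⟩ := Subgroup.nilpotent_iff_lowerCentralSeries.mp hH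
  let N := Subgroup.lowerCentralIsolator A n
  have hIA (c : C) : φ c ∈ ((⊤ : Subgroup A).lowerCentralSeries 1).autInertia := fun a => by
    rw [Subgroup.top_lowerCentralSeries_one]
    exact QuotientGroup.eq.mp (h c a).symm
  have := SemidirectProduct.isNilpotent_quotient φ N hIA
  have haN : (a : A ⧸ N) ≠ 1 := fun ha =>
    hfa (Subgroup.lowerCentralIsolator_le_ker f hn htf ((QuotientGroup.eq_one_iff a).mp ha))
  obtain ⟨P, _, g, hP, htfP, hga⟩ := Group.exists_torsionFree_quotient_apply_ne_one
    (g := SemidirectProduct.toQuotient φ N (SemidirectProduct.inl a)) (by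
      rw [SemidirectProduct.toQuotient_inl, SemidirectProduct.inl_injective.isOfFinOrder_iff]
      exact Subgroup.isTorsionFree_quotient_lowerCentralIsolator _ haN)
  exact ⟨P, _, g.comp (SemidirectProduct.toQuotient φ N), hP, htfP, hga⟩
end
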